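/- arXiv:1207.3889 — 3 statements merged into one kernel-verified Lean document; each statement's English description precedes it below -/
import Mathlib

section
/- Let C be a chain complex over F[U] which is a direct sum of a free F[U]-module on cycles and a submodule on which the differential is injective with free image summand structure as in the model complex: generators x_1,...,x_n, y_1,...,y_{n+1} with ∂x_k = U^{c_k} y_k + y_{k+1} for positive integers c_k and ∂y_ℓ = 0. Then H_*(C) ≅ F[U], generated by the class of y_1 modulo boundaries, and the classes [U^{c_1+...+c_k} y_1] = [U^{c_2+...+c_k} y_2] = ... = [y_{k+1}] in homology for each k. -/
open Polynomial

noncomputable section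

/-- `F[U]` where `F = ℤ/2ℤ`. -/
abbrev FU : Type := Polynomial (ZMod 2)

/-- The underlying module of the staircase model complex over `F[U]`: free on
`x_1,…,x_n` (first factor) and `y_1,…,y_{n+1}` (second factor). -/
abbrev ModelCx (n : ℕ) : Type := (Fin n → FU) × (Fin (n + 1) → FU)

/-- The generator `y_j` of the model complex. -/
def yGen (n : ℕ) (j : Fin (n + 1)) : ModelCx n := (0, Pi.single j 1)

namespace Staircase

variable (n : ℕ) (c : Fin n → ℕ)

def eA (m : ℕ) : ℕ := ∑ j : Fin n, if (j:ℕ) < m then c j else 0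

lemma eA_zero : eA n c 0 = 0 := by simp [eA]

lemma eA_succ (k : ℕ) (hk : k < n) : eA n c (k+1) = eA n c k + c ⟨k, hk⟩ := by
  unfold eA
  have h : ∀ j : Fin n, (if (j:ℕ) < k+1 then c j else 0)
      = (if (j:ℕ) < k then c j else 0) + (if j = ⟨k,hk⟩ then c j else 0) := by
    intro j
    rcases lt_trichotomy (j:ℕ) k with h1 | h1 | h1
    · rw [if_pos (by omega), if_pos h1, if_neg (by simp [Fin.ext_iff]; omega)]; omega
    · rw [if_pos (by omega), if_neg (by omega), if_pos (by simp [Fin.ext_iff, h1])]; omega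
    · rw [if_neg (by omega), if_neg (by omega), if_neg (by simp [Fin.ext_iff]; omega)]
  rw [Finset.sum_congr rfl (fun j _ => h j), Finset.sum_add_distrib]
  simp

def phiA : ModelCx n →ₗ[FU] FU where
  toFun v := ∑ ℓ : Fin (n+1), X ^ (eA n c (ℓ:ℕ)) * v.2 ℓ
  map_add' v w := by simp [mul_add, Finset.sum_add_distrib]
  map_smul' r v := by simp [Finset.mul_sum, mul_left_comm]

lemma phiA_apply (v : ModelCx n) :
    phiA n c v = ∑ ℓ : Fin (n+1), X ^ (eA n c (ℓ:ℕ)) * v.2 ℓ := rfl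

lemma phiA_yGen (j : Fin (n+1)) : phiA n c (yGen n j) = X ^ (eA n c (j:ℕ)) := by
  rw [phiA_apply]
  simp only [yGen, Pi.single_apply]
  rw [Finset.sum_eq_single j]
  · simp
  · intro b _ hb; simp [hb]
  · simp

lemma phiA_yGen_zero : phiA n c (yGen n 0) = 1 := by
  rw [phiA_yGen]; simp [eA_zero]

lemma smul_yGen_sub (a : FU) (i j : Fin (n+1)) :
    a • yGen n i - yGen n j =
      ((0 : Fin n → FU), fun ℓ : Fin (n+1) =>
        a * (if ℓ = i then 1 else 0) - (if ℓ = j then (1:FU) else 0)) := by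
  refine Prod.ext (by simp [yGen]) ?_
  funext ℓ
  show a • (Pi.single i 1 : Fin (n+1) → FU) ℓ - (Pi.single j 1 : Fin (n+1) → FU) ℓ = _
  simp [Pi.single_apply]

variable (D : ModelCx n →ₗ[FU] ModelCx n)
variable (hD : ∀ v : ModelCx n, D v =
      (0, fun ℓ : Fin (n + 1) =>
        (if h : (ℓ : ℕ) < n then
            (X : FU) ^ (c ⟨(ℓ : ℕ), h⟩) * v.1 ⟨(ℓ : ℕ), h⟩ else 0) +
        (if h : 0 < (ℓ : ℕ) then
            v.1 ⟨(ℓ : ℕ) - 1, by have := ℓ.isLt; omega⟩ else 0)))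

include hD

lemma D_of_fst_zero (v : ModelCx n) (hv : v.1 = 0) : D v = 0 := by
  rw [hD v, hv]
  refine Prod.ext rfl ?_
  funext ℓ
  simp

lemma D_D (v : ModelCx n) : D (D v) = 0 := by
  apply D_of_fst_zero n c D hD
  rw [hD v]

lemma ker_fst (v : ModelCx n) (hv : D v = 0) : v.1 = 0 := by
  rw [hD v] at hv
  have h2 : ∀ ℓ : Fin (n+1),
      (if h : (ℓ : ℕ) < n then (X : FU) ^ (c ⟨(ℓ : ℕ), h⟩) * v.1 ⟨(ℓ : ℕ), h⟩ else 0) +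
      (if h : 0 < (ℓ : ℕ) then v.1 ⟨(ℓ : ℕ) - 1, by omega⟩ else 0) = 0 := by
    intro ℓ
    exact congrFun (congrArg Prod.snd hv) ℓ
  have main : ∀ m, ∀ hm : m < n, v.1 ⟨m, hm⟩ = 0 := by
    intro m
    induction m using Nat.strong_induction_on with
    | _ m ih =>
      intro hm
      have key := h2 ⟨m, by omega⟩
      rw [dif_pos (show ((⟨m, by omega⟩ : Fin (n+1)) : ℕ) < n from hm)] at key
      by_cases h0 : 0 < m
      · rw [dif_pos h0] at key
        have hprev : v.1 ⟨m-1, by omega⟩ = 0 := ih (m-1) (by omega) (by omega)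
        rw [hprev, add_zero] at key
        rcases mul_eq_zero.mp key with h | h
        · exact absurd h (pow_ne_zero _ X_ne_zero)
        · exact h
      · rw [dif_neg h0, add_zero] at key
        rcases mul_eq_zero.mp key with h | h
        · exact absurd h (pow_ne_zero _ X_ne_zero)
        · exact h
  funext k
  have := main (k:ℕ) k.isLt
  simpa using this

lemma phi_D (v : ModelCx n) : phiA n c (D v) = 0 := by
  rw [hD v, phiA_apply]
  have hsplit : ∀ ℓ : Fin (n+1), X ^ (eA n c (ℓ:ℕ)) *
      ((if h : (ℓ : ℕ) < n then (X : FU) ^ (c ⟨(ℓ : ℕ), h⟩) * v.1 ⟨(ℓ : ℕ), h⟩ else 0) +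
       (if h : 0 < (ℓ : ℕ) then v.1 ⟨(ℓ : ℕ) - 1, by omega⟩ else 0)) =
      (X ^ (eA n c (ℓ:ℕ)) * (if h : (ℓ : ℕ) < n then (X : FU) ^ (c ⟨(ℓ : ℕ), h⟩) * v.1 ⟨(ℓ : ℕ), h⟩ else 0)) +
      (X ^ (eA n c (ℓ:ℕ)) * (if h : 0 < (ℓ : ℕ) then v.1 ⟨(ℓ : ℕ) - 1, by omega⟩ else 0)) := by
    intro ℓ; rw [mul_add]
  rw [Finset.sum_congr rfl (fun ℓ _ => hsplit ℓ), Finset.sum_add_distrib]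
  have hA : ∑ ℓ : Fin (n+1), (X ^ (eA n c (ℓ:ℕ)) *
      (if h : (ℓ : ℕ) < n then (X : FU) ^ (c ⟨(ℓ : ℕ), h⟩) * v.1 ⟨(ℓ : ℕ), h⟩ else 0)) =
      ∑ i : Fin n, X ^ (eA n c ((i:ℕ)+1)) * v.1 i := by
    rw [Fin.sum_univ_castSucc]
    rw [dif_neg (by simp)]
    rw [mul_zero, add_zero]
    apply Finset.sum_congr rfl
    intro i _
    rw [dif_pos (show ((i.castSucc : Fin (n+1)) : ℕ) < n from i.isLt)]
    rw [← mul_assoc, ← pow_add, eA_succ n c (i:ℕ) i.isLt]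
    rfl
  have hB : ∑ ℓ : Fin (n+1), (X ^ (eA n c (ℓ:ℕ)) *
      (if h : 0 < (ℓ : ℕ) then v.1 ⟨(ℓ : ℕ) - 1, by omega⟩ else 0)) =
      ∑ i : Fin n, X ^ (eA n c ((i:ℕ)+1)) * v.1 i := by
    rw [Fin.sum_univ_succ]
    rw [dif_neg (by simp), mul_zero, zero_add]
    apply Finset.sum_congr rfl
    intro i _
    rw [dif_pos (show 0 < ((i.succ : Fin (n+1)) : ℕ) from Nat.succ_pos _)]
    simp only [Fin.val_succ]
    rw [eA_succ n c (i:ℕ) i.isLt]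
    rfl
  rw [hA, hB, ← Finset.sum_add_distrib]
  apply Finset.sum_eq_zero
  intro i _
  exact CharTwo.add_self_eq_zero _

lemma range_part3 (k : Fin n) :
    (X : FU) ^ (c k) • yGen n k.castSucc - yGen n k.succ ∈ LinearMap.range D := by
  refine ⟨(Pi.single k 1, 0), ?_⟩
  rw [hD, smul_yGen_sub n]
  refine Prod.ext rfl ?_
  funext ℓ
  show (if h : (ℓ:ℕ) < n then
          (X : FU) ^ (c ⟨(ℓ:ℕ), h⟩) * (Pi.single k 1 : Fin n → FU) ⟨(ℓ:ℕ), h⟩ else 0) +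
      (if h : 0 < (ℓ:ℕ) then (Pi.single k 1 : Fin n → FU) ⟨(ℓ:ℕ) - 1, by omega⟩ else 0) =
      (X:FU) ^ (c k) * (if ℓ = k.castSucc then 1 else 0) - (if ℓ = k.succ then (1:FU) else 0)
  by_cases h1 : (ℓ:ℕ) = (k:ℕ)
  · have hℓn : (ℓ:ℕ) < n := h1 ▸ k.isLt
    rw [dif_pos hℓn]
    have hk : (⟨(ℓ:ℕ), hℓn⟩ : Fin n) = k := by simp [Fin.ext_iff, h1]
    rw [hk]
    rw [show (Pi.single k (1:FU) : Fin n → FU) k = 1 from by simp]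
    rw [if_pos (show ℓ = k.castSucc from by simp [Fin.ext_iff, h1])]
    rw [if_neg (show ¬ ℓ = k.succ from by simp [Fin.ext_iff]; omega)]
    have h2 : (if h : 0 < (ℓ:ℕ) then (Pi.single k 1 : Fin n → FU) ⟨(ℓ:ℕ)-1, by omega⟩ else 0) = 0 := by
      split_ifs with h0
      · rw [Pi.single_apply, if_neg (by simp [Fin.ext_iff]; omega)]
      · rfl
    rw [h2]
    ring
  · by_cases h2 : (ℓ:ℕ) = (k:ℕ)+1
    · rw [if_neg (show ¬ ℓ = k.castSucc from by simp [Fin.ext_iff]; omega)]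
      rw [if_pos (show ℓ = k.succ from by simp [Fin.ext_iff]; omega)]
      have hfirst : (if h : (ℓ:ℕ) < n then
          (X : FU) ^ (c ⟨(ℓ:ℕ), h⟩) * (Pi.single k 1 : Fin n → FU) ⟨(ℓ:ℕ), h⟩ else 0) = 0 := by
        split_ifs with hn
        · rw [Pi.single_apply, if_neg (by simp [Fin.ext_iff]; omega), mul_zero]
        · rfl
      rw [hfirst, dif_pos (show 0 < (ℓ:ℕ) by omega)]
      rw [Pi.single_apply, if_pos (by simp [Fin.ext_iff]; omega)]
      rw [zero_add, mul_zero, zero_sub, CharTwo.neg_eq]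
    · rw [if_neg (show ¬ ℓ = k.castSucc from by simp [Fin.ext_iff]; omega)]
      rw [if_neg (show ¬ ℓ = k.succ from by simp [Fin.ext_iff]; omega)]
      have hfirst : (if h : (ℓ:ℕ) < n then
          (X : FU) ^ (c ⟨(ℓ:ℕ), h⟩) * (Pi.single k 1 : Fin n → FU) ⟨(ℓ:ℕ), h⟩ else 0) = 0 := by
        split_ifs with hn
        · rw [Pi.single_apply, if_neg (by simp [Fin.ext_iff]; omega), mul_zero]
        · rfl
      have hsecond : (if h : 0 < (ℓ:ℕ) then
          (Pi.single k 1 : Fin n → FU) ⟨(ℓ:ℕ)-1, by omega⟩ else 0) = 0 := by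
        split_ifs with h0
        · rw [Pi.single_apply, if_neg (by simp [Fin.ext_iff]; omega)]
        · rfl
      rw [hfirst, hsecond]
      ring

lemma span_mem (v : ModelCx n) (hv : v.1 = 0) :
    v ∈ LinearMap.range D ⊔ Submodule.span FU {yGen n 0} := by
  set S := LinearMap.range D ⊔ Submodule.span FU {yGen n 0} with hS
  suffices Q : ∀ m : ℕ, ∀ b : Fin (n+1) → FU,
      (∀ j : Fin (n+1), m ≤ (j:ℕ) → b j = 0) → ((0 : Fin n → FU), b) ∈ S by
    have h := Q (n+1) v.2 (fun j hj => absurd j.isLt (by omega))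
    have hveq : v = ((0 : Fin n → FU), v.2) := by
      rw [← hv]
    rw [hveq]; exact h
  intro m
  induction m with
  | zero =>
    intro b hb
    have hb0 : b = 0 := funext fun j => hb j (Nat.zero_le _)
    rw [hb0]
    exact Submodule.zero_mem _
  | succ m ih =>
    intro b hb
    by_cases hm : m < n + 1
    · by_cases hm0 : 0 < m
      · set k : Fin n := ⟨m-1, by omega⟩ with hk
        have hks : ((k.succ : Fin (n+1)) : ℕ) = m := by simp [hk]; omega
        have hkc : ((k.castSucc : Fin (n+1)) : ℕ) = m - 1 := by simp [hk]
        set E : Fin (n+1) → FU :=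
          ((X : FU) ^ (c k) • yGen n k.castSucc - yGen n k.succ).2 with hE
        set b' : Fin (n+1) → FU := fun j => b j - b ⟨m, hm⟩ * E j with hb'
        have hdecomp : ((0 : Fin n → FU), b) =
            b ⟨m, hm⟩ • ((X : FU) ^ (c k) • yGen n k.castSucc - yGen n k.succ)
              + ((0 : Fin n → FU), b') := by
          refine Prod.ext ?_ ?_
          · show 0 = b ⟨m, hm⟩ • ((X : FU) ^ (c k) • yGen n k.castSucc - yGen n k.succ).1 + 0
            simp [yGen]
          · funext j
            show b j = b ⟨m, hm⟩ • E j + b' j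
            rw [hb']
            simp only [smul_eq_mul]
            ring
        have hEval : ∀ j : Fin (n+1), (m:ℕ) ≤ (j:ℕ) → b' j = 0 := by
          intro j hj
          rcases eq_or_lt_of_le hj with hj1 | hj1
          · have hjm : j = ⟨m, hm⟩ := by simp [Fin.ext_iff]; omega
            have hEj : E j = -1 := by
              rw [hE]
              show ((X : FU) ^ (c k)) • (yGen n k.castSucc).2 j - (yGen n k.succ).2 j = -1
              simp only [yGen, Pi.smul_apply, Pi.single_apply, smul_eq_mul]
              rw [if_neg (show ¬ j = k.castSucc by rw [Fin.ext_iff, hkc]; omega),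
                  if_pos (show j = k.succ by rw [Fin.ext_iff, hks]; omega)]
              ring
            show b j - b ⟨m, hm⟩ * E j = 0
            rw [hEj, hjm]
            rw [mul_neg_one, sub_neg_eq_add]
            exact CharTwo.add_self_eq_zero _
          · have hbz : b j = 0 := hb j (by omega)
            have hEj : E j = 0 := by
              rw [hE]
              show ((X : FU) ^ (c k)) • (yGen n k.castSucc).2 j - (yGen n k.succ).2 j = 0
              simp only [yGen, Pi.smul_apply, Pi.single_apply, smul_eq_mul]
              rw [if_neg (show ¬ j = k.castSucc by rw [Fin.ext_iff, hkc]; omega),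
                  if_neg (show ¬ j = k.succ by rw [Fin.ext_iff, hks]; omega)]
              ring
            show b j - b ⟨m, hm⟩ * E j = 0
            rw [hbz, hEj, mul_zero, sub_zero]
        rw [hdecomp]
        refine Submodule.add_mem _ ?_ (ih b' (fun j hj => hEval j hj))
        · refine Submodule.mem_sup_left ?_
          exact Submodule.smul_mem _ _ (range_part3 n c D hD k)
      · -- m = 0
        have hm0' : m = 0 := by omega
        have hbsingle : ((0 : Fin n → FU), b) = b 0 • yGen n 0 := by
          refine Prod.ext (by simp [yGen]) ?_
          funext j
          show b j = b 0 • (Pi.single 0 1 : Fin (n+1) → FU) j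
          by_cases hj : j = 0
          · rw [hj]; simp
          · rw [hb j (by
              have hj' : (j:ℕ) ≠ 0 := fun h => hj (Fin.ext (by simp [h]))
              omega)]
            rw [Pi.single_apply, if_neg hj]
            simp
        rw [hbsingle]
        exact Submodule.mem_sup_right
          (Submodule.smul_mem _ _ (Submodule.subset_span rfl))
    · exact ih b (fun j hj => absurd (lt_of_le_of_lt hj j.isLt) (by omega))

lemma range_part4 : ∀ m (hm : m < n),
    (X:FU) ^ (eA n c (m+1)) • yGen n 0 - yGen n (⟨m, hm⟩ : Fin n).succ
      ∈ LinearMap.range D := by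
  intro m
  induction m with
  | zero =>
    intro hm
    have h := range_part3 n c D hD ⟨0, hm⟩
    have h0 : (⟨0, hm⟩ : Fin n).castSucc = 0 := by ext; simp
    rw [eA_succ n c 0 hm, eA_zero, zero_add, ← h0]
    exact h
  | succ m ih =>
    intro hm
    have h1 := ih (by omega)
    have h2 := range_part3 n c D hD ⟨m+1, hm⟩
    have hcs : (⟨m+1, hm⟩ : Fin n).castSucc = (⟨m, by omega⟩ : Fin n).succ := by
      ext; simp
    have key : (X:FU) ^ (eA n c (m+1+1)) • yGen n 0 - yGen n (⟨m+1, hm⟩ : Fin n).succ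
        = (X:FU) ^ (c ⟨m+1, hm⟩) •
            ((X:FU) ^ (eA n c (m+1)) • yGen n 0 - yGen n (⟨m, by omega⟩ : Fin n).succ)
          + ((X:FU) ^ (c ⟨m+1, hm⟩) • yGen n (⟨m+1, hm⟩ : Fin n).castSucc
              - yGen n (⟨m+1, hm⟩ : Fin n).succ) := by
      rw [hcs, smul_sub, smul_smul, ← pow_add, eA_succ n c (m+1) hm]
      rw [add_comm (eA n c (m+1)) (c ⟨m+1, hm⟩)]
      abel
    rw [key]
    exact Submodule.add_mem _ (Submodule.smul_mem _ _ h1) h2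

end Staircase

/-- For the staircase complex with `∂ x_k = U^{c_k} y_k + y_{k+1}`
(`c_k > 0`) and `∂ y_ℓ = 0`, the homology is `≅ F[U]`, generated by the class of
`y_1`; in homology `[U^{c_k} y_k] = [y_{k+1}]` and
`[U^{c_1+⋯+c_k} y_1] = [y_{k+1}]` for each `k`. -/

theorem staircase_homology (n : ℕ)
    (c : Fin n → ℕ) (hc : ∀ k, 0 < c k)
    (D : ModelCx n →ₗ[FU] ModelCx n)
    (hD : ∀ v : ModelCx n, D v =
      (0, fun ℓ : Fin (n + 1) =>
        (if h : (ℓ : ℕ) < n then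
            (X : FU) ^ (c ⟨(ℓ : ℕ), h⟩) * v.1 ⟨(ℓ : ℕ), h⟩ else 0) +
        (if h : 0 < (ℓ : ℕ) then
            v.1 ⟨(ℓ : ℕ) - 1, by omega⟩ else 0))) :
    Nonempty ((LinearMap.ker D ⧸
        (LinearMap.range D).comap (LinearMap.ker D).subtype) ≃ₗ[FU] FU) ∧
    LinearMap.range D ⊔ Submodule.span FU {yGen n 0} = LinearMap.ker D ∧
    (∀ k : Fin n,
      (X : FU) ^ (c k) • yGen n k.castSucc - yGen n k.succ ∈ LinearMap.range D) ∧
    (∀ k : Fin n,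
      (X : FU) ^ (∑ ℓ : Fin n, if (ℓ : ℕ) ≤ (k : ℕ) then c ℓ else 0) • yGen n 0
        - yGen n k.succ ∈ LinearMap.range D) := by
  have hker_eq : LinearMap.range D ⊔ Submodule.span FU {yGen n 0} = LinearMap.ker D := by
    apply le_antisymm
    · apply sup_le
      · rintro _ ⟨u, rfl⟩
        exact LinearMap.mem_ker.mpr (Staircase.D_D n c D hD u)
      · rw [Submodule.span_le, Set.singleton_subset_iff]
        exact LinearMap.mem_ker.mpr (Staircase.D_of_fst_zero n c D hD _ rfl)
    · intro v hv
      exact Staircase.span_mem n c D hD v (Staircase.ker_fst n c D hD v hv)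
  refine ⟨?_, hker_eq, fun k => Staircase.range_part3 n c D hD k, fun k => ?_⟩
  · set ψ : LinearMap.ker D →ₗ[FU] FU :=
      (Staircase.phiA n c).comp (LinearMap.ker D).subtype with hψ
    have hsurj : Function.Surjective ψ := by
      intro p
      refine ⟨⟨p • yGen n 0, LinearMap.mem_ker.mpr ?_⟩, ?_⟩
      · rw [map_smul, Staircase.D_of_fst_zero n c D hD _ rfl, smul_zero]
      · show Staircase.phiA n c (p • yGen n 0) = p
        rw [map_smul, Staircase.phiA_yGen_zero, smul_eq_mul, mul_one]
    have hkerψ : LinearMap.ker ψ = (LinearMap.range D).comap (LinearMap.ker D).subtype := by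
      ext ⟨v, hv⟩
      constructor
      · intro h0
        have h0' : Staircase.phiA n c v = 0 := h0
        have hmem := Staircase.span_mem n c D hD v (Staircase.ker_fst n c D hD v hv)
        rcases Submodule.mem_sup.mp hmem with ⟨r, hr, s, hs, hrs⟩
        rcases Submodule.mem_span_singleton.mp hs with ⟨q, rfl⟩
        rcases hr with ⟨u, rfl⟩
        have hq : q = 0 := by
          have : Staircase.phiA n c v = q := by
            rw [← hrs, map_add, map_smul, Staircase.phi_D n c D hD u,
              Staircase.phiA_yGen_zero, zero_add, smul_eq_mul, mul_one]
          rw [← this, h0']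
        show v ∈ LinearMap.range D
        rw [← hrs, hq, zero_smul, add_zero]
        exact ⟨u, rfl⟩
      · rintro ⟨u, hu⟩
        show Staircase.phiA n c v = 0
        have hu' : D u = v := hu
        rw [← hu']
        exact Staircase.phi_D n c D hD u
    exact ⟨(Submodule.quotEquivOfEq _ _ hkerψ.symm).trans
      (ψ.quotKerEquivOfSurjective hsurj)⟩
  · have hsum : (∑ ℓ : Fin n, if (ℓ : ℕ) ≤ (k : ℕ) then c ℓ else 0)
        = Staircase.eA n c ((k:ℕ)+1) := by
      unfold Staircase.eA
      refine Finset.sum_congr rfl fun ℓ _ => ?_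
      exact if_congr (by omega) rfl rfl
    rw [hsum]
    have h := Staircase.range_part4 n c D hD (k:ℕ) k.isLt
    simpa using h
end
end

section
/- Consider a commutative square of F[U]-modules, all isomorphic to F[U], with horizontal maps multiplication by U^{1−d} (top) and U^{1−d'} (bottom), and vertical maps multiplication by U^{d} (left, going up) and U^{d'} (right, going up), where d, d' ∈ {0,1}; form the total complex of this 2×2 square (iterated mapping cone). Then the homology of this total complex is trivial if d = d', and is isomorphic to F (one-dimensional over F) if d ≠ d'. -/
open Polynomial

noncomputable section

/-- Top differential of the total complex of the `2×2` square: the bottom-left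
corner maps to the bottom-right corner by `U^{1−d'}` (bottom horizontal map)
and to the top-left corner by `U^{d}` (left vertical map). -/
def sqD2 (d d' : ℕ) : FU →ₗ[FU] FU × FU :=
  (LinearMap.lsmul FU FU ((X : FU) ^ (1 - d'))).prod
    (LinearMap.lsmul FU FU ((X : FU) ^ d))

/-- Bottom differential: the bottom-right corner maps to the top-right corner by
`U^{d'}` (right vertical map) and the top-left corner maps to the top-right
corner by `U^{1−d}` (top horizontal map); over `F = ℤ/2ℤ` signs are irrelevant. -/
def sqD1 (d d' : ℕ) : FU × FU →ₗ[FU] FU :=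
  (LinearMap.lsmul FU FU ((X : FU) ^ d')).coprod
    (LinearMap.lsmul FU FU ((X : FU) ^ (1 - d)))

lemma sqD2_apply (d d' : ℕ) (x : FU) :
    sqD2 d d' x = ((X : FU) ^ (1 - d') * x, (X : FU) ^ d * x) := rfl

lemma sqD1_apply (d d' : ℕ) (p : FU × FU) :
    sqD1 d d' p = (X : FU) ^ d' * p.1 + (X : FU) ^ (1 - d) * p.2 := rfl

lemma char2_add_eq_zero (a b : FU) : a + b = 0 ↔ a = b := by
  rw [← CharTwo.sub_eq_add, sub_eq_zero]

lemma ker_sqD2 (d d' : ℕ) : LinearMap.ker (sqD2 d d') = ⊥ := by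
  rw [LinearMap.ker_eq_bot']
  intro m h
  have h1 : (X : FU) ^ (1 - d') * m = 0 := congrArg Prod.fst h
  rcases mul_eq_zero.mp h1 with h2 | h2
  · exact absurd h2 (pow_ne_zero _ X_ne_zero)
  · exact h2

/-- Dropping a subsingleton left factor of a product. -/
def prodEquivLeft (R M N : Type) [Ring R] [AddCommGroup M] [Module R M]
    [AddCommGroup N] [Module R N] [Subsingleton M] : (M × N) ≃ₗ[R] N where
  toFun := Prod.snd
  invFun := fun n => (0, n)
  left_inv := fun _ => Prod.ext (Subsingleton.elim _ _) rfl
  right_inv := fun _ => rfl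
  map_add' := fun _ _ => rfl
  map_smul' := fun _ _ => rfl

/-- Dropping a subsingleton right factor of a product. -/
def prodEquivRight (R M N : Type) [Ring R] [AddCommGroup M] [Module R M]
    [AddCommGroup N] [Module R N] [Subsingleton N] : (M × N) ≃ₗ[R] M where
  toFun := Prod.fst
  invFun := fun m => (m, 0)
  left_inv := fun _ => Prod.ext rfl (Subsingleton.elim _ _)
  right_inv := fun _ => rfl
  map_add' := fun _ _ => rfl
  map_smul' := fun _ _ => rfl

/-- The total complex of the commutative square of copies of
`F[U]` with horizontal maps `U^{1−d}` (top), `U^{1−d'}` (bottom) and vertical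
maps `U^{d}` (left), `U^{d'}` (right), `d, d' ∈ {0,1}`, has trivial homology if
`d = d'`, and homology isomorphic to `F ≅ F[U]/(U)` (one-dimensional over `F`)
if `d ≠ d'`. -/
theorem square_total_complex_homology (d d' : ℕ) (hd : d ≤ 1) (hd' : d' ≤ 1) :
    (d = d' →
      LinearMap.ker (sqD2 d d') = ⊥ ∧
      LinearMap.ker (sqD1 d d') = LinearMap.range (sqD2 d d') ∧
      LinearMap.range (sqD1 d d') = ⊤) ∧
    (d ≠ d' →
      LinearMap.ker (sqD2 d d') = ⊥ ∧
      Nonempty (((LinearMap.ker (sqD1 d d') ⧸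
          (LinearMap.range (sqD2 d d')).comap (LinearMap.ker (sqD1 d d')).subtype) ×
          (FU ⧸ LinearMap.range (sqD1 d d'))) ≃ₗ[FU]
        FU ⧸ Ideal.span {(X : FU)})) := by
  interval_cases d <;> interval_cases d'
  · -- d = 0, d' = 0
    refine ⟨fun _ => ⟨ker_sqD2 _ _, ?_, ?_⟩, fun h => absurd rfl h⟩
    · ext ⟨a, b⟩
      simp only [LinearMap.mem_ker, LinearMap.mem_range, sqD1_apply, sqD2_apply,
        pow_zero, pow_one, one_mul, Nat.sub_zero, Prod.mk.injEq]
      constructor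
      · intro h
        exact ⟨b, ((char2_add_eq_zero _ _).mp h).symm, rfl⟩
      · rintro ⟨y, rfl, rfl⟩
        rw [char2_add_eq_zero]
    · rw [LinearMap.range_eq_top]
      intro c
      refine ⟨(c, 0), ?_⟩
      simp [sqD1_apply]
  · -- d = 0, d' = 1
    refine ⟨fun h => absurd h (by norm_num), fun _ => ⟨ker_sqD2 _ _, ?_⟩⟩
    have hker : LinearMap.ker (sqD1 0 1) = LinearMap.range (sqD2 0 1) := by
      ext ⟨a, b⟩
      simp only [LinearMap.mem_ker, LinearMap.mem_range, sqD1_apply, sqD2_apply,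
        pow_zero, pow_one, one_mul, Nat.sub_self, Nat.sub_zero, Prod.mk.injEq]
      constructor
      · intro h
        rw [← mul_add, mul_eq_zero] at h
        rcases h with h | h
        · exact absurd h X_ne_zero
        · exact ⟨a, rfl, (char2_add_eq_zero _ _).mp h⟩
      · rintro ⟨y, rfl, rfl⟩
        exact CharTwo.add_self_eq_zero _
    have hcom : (LinearMap.range (sqD2 0 1)).comap
        (LinearMap.ker (sqD1 0 1)).subtype = ⊤ := by
      rw [Submodule.comap_subtype_eq_top]
      exact le_of_eq hker
    haveI : Subsingleton (LinearMap.ker (sqD1 0 1) ⧸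
        (LinearMap.range (sqD2 0 1)).comap (LinearMap.ker (sqD1 0 1)).subtype) :=
      Submodule.Quotient.subsingleton_iff.mpr hcom
    have hrange : LinearMap.range (sqD1 0 1) = Ideal.span {(X : FU)} := by
      ext x
      simp only [LinearMap.mem_range, sqD1_apply, pow_one, pow_zero, Nat.sub_self, Nat.sub_zero,
        Ideal.mem_span_singleton, Prod.exists]
      constructor
      · rintro ⟨a, b, h⟩
        exact ⟨a + b, by rw [← h]; ring⟩
      · rintro ⟨c, rfl⟩
        exact ⟨c, 0, by ring⟩
    exact ⟨(prodEquivLeft FU _ _).trans (Submodule.quotEquivOfEq _ _ hrange)⟩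
  · -- d = 1, d' = 0
    refine ⟨fun h => absurd h (by norm_num), fun _ => ⟨ker_sqD2 _ _, ?_⟩⟩
    have hrt : LinearMap.range (sqD1 1 0) = ⊤ := by
      rw [LinearMap.range_eq_top]
      intro c
      refine ⟨(c, 0), ?_⟩
      simp [sqD1_apply]
    haveI : Subsingleton (FU ⧸ LinearMap.range (sqD1 1 0)) :=
      Submodule.Quotient.subsingleton_iff.mpr hrt
    set f : LinearMap.ker (sqD1 1 0) →ₗ[FU] FU ⧸ Ideal.span {(X : FU)} :=
      (Ideal.span {(X : FU)}).mkQ ∘ₗ (LinearMap.fst FU FU FU) ∘ₗ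
        (LinearMap.ker (sqD1 1 0)).subtype with hf
    have hsurj : Function.Surjective f := by
      intro q
      obtain ⟨c, rfl⟩ := Submodule.mkQ_surjective _ q
      refine ⟨⟨(c, c), ?_⟩, rfl⟩
      simp only [LinearMap.mem_ker, sqD1_apply, pow_zero, Nat.sub_self, one_mul]
      rw [char2_add_eq_zero]
    have hkf : (LinearMap.range (sqD2 1 0)).comap
        (LinearMap.ker (sqD1 1 0)).subtype = LinearMap.ker f := by
      ext ⟨⟨a, b⟩, hab⟩
      have hba : b = a := by
        simp only [LinearMap.mem_ker, sqD1_apply, pow_zero, Nat.sub_self, one_mul] at hab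
        exact ((char2_add_eq_zero _ _).mp hab).symm
      subst hba
      simp only [Submodule.mem_comap, Submodule.subtype_apply, LinearMap.mem_range,
        sqD2_apply, pow_one, pow_zero, Nat.sub_zero, Prod.mk.injEq, LinearMap.mem_ker,
        hf, LinearMap.comp_apply, LinearMap.fst_apply, Submodule.mkQ_apply,
        Submodule.Quotient.mk_eq_zero, Ideal.mem_span_singleton]
      constructor
      · rintro ⟨y, rfl, -⟩
        exact ⟨y, rfl⟩
      · rintro ⟨c, rfl⟩
        exact ⟨c, rfl, rfl⟩
    have e2 : (LinearMap.ker (sqD1 1 0) ⧸ LinearMap.ker f) ≃ₗ[FU]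
        FU ⧸ Ideal.span {(X : FU)} := f.quotKerEquivOfSurjective hsurj
    exact ⟨(prodEquivRight FU _ _).trans ((Submodule.quotEquivOfEq _ _ hkf).trans e2)⟩
  · -- d = 1, d' = 1
    refine ⟨fun _ => ⟨ker_sqD2 _ _, ?_, ?_⟩, fun h => absurd rfl h⟩
    · ext ⟨a, b⟩
      simp only [LinearMap.mem_ker, LinearMap.mem_range, sqD1_apply, sqD2_apply,
        pow_zero, pow_one, one_mul, Nat.sub_self, Nat.sub_zero, Prod.mk.injEq]
      constructor
      · intro h
        exact ⟨a, rfl, (char2_add_eq_zero _ _).mp h⟩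
      · rintro ⟨y, rfl, rfl⟩
        rw [char2_add_eq_zero]
    · rw [LinearMap.range_eq_top]
      intro c
      refine ⟨(0, c), ?_⟩
      simp [sqD1_apply]
end
end

section
/- Let C be a finitely generated chain complex over a ring R equipped with a filtration by subcomplexes. If the differential induced on the associated graded complex has homology which is free as an R-module in each filtration level, then C is filtered chain homotopy equivalent to a filtered complex whose associated graded differential vanishes (a minimal complex). -/
noncomputable section

/-- A filtered chain complex over a field `k`: a `k`-module with a square-zero
differential and an increasing exhaustive filtration by subcomplexes. -/
structure FilteredComplex (k : Type) [Field k] where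
  C : Type
  [acg : AddCommGroup C]
  [mod : Module k C]
  d : C →ₗ[k] C
  dsq : d ∘ₗ d = 0
  filt : ℤ → Submodule k C
  mono : Monotone filt
  exhaustive : ∀ x : C, ∃ i, x ∈ filt i
  dfilt : ∀ i, Submodule.map d (filt i) ≤ filt i

attribute [instance] FilteredComplex.acg FilteredComplex.mod

variable (k : Type) [Field k]

/-- A filtration-preserving chain map between filtered complexes. -/
def IsFilteredChainMap (X Y : FilteredComplex k) (f : X.C →ₗ[k] Y.C) : Prop :=
  f ∘ₗ X.d = Y.d ∘ₗ f ∧ ∀ i, Submodule.map f (X.filt i) ≤ Y.filt i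

/-- A filtration-preserving linear endomorphism (used for homotopies). -/
def PreservesFiltration (X : FilteredComplex k) (h : X.C →ₗ[k] X.C) : Prop :=
  ∀ i, Submodule.map h (X.filt i) ≤ X.filt i

/-- Filtered chain homotopy equivalence: filtration-preserving chain maps in both
directions whose composites are filtered-homotopic to the identity. -/
def FilteredHomotopyEquiv (X Y : FilteredComplex k) : Prop :=
  ∃ (f : X.C →ₗ[k] Y.C) (g : Y.C →ₗ[k] X.C)
    (hX : X.C →ₗ[k] X.C) (hY : Y.C →ₗ[k] Y.C),
    IsFilteredChainMap k X Y f ∧ IsFilteredChainMap k Y X g ∧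
    PreservesFiltration k X hX ∧ PreservesFiltration k Y hY ∧
    g ∘ₗ f - LinearMap.id = X.d ∘ₗ hX + hX ∘ₗ X.d ∧
    f ∘ₗ g - LinearMap.id = Y.d ∘ₗ hY + hY ∘ₗ Y.d

/-- A filtered complex is minimal if the differential induced on the associated
graded complex vanishes, i.e. the differential strictly drops filtration level. -/
def IsMinimal (Y : FilteredComplex k) : Prop :=
  ∀ i, Submodule.map Y.d (Y.filt i) ≤ Y.filt (i - 1)

-- reflexivity
lemma FHE_refl (X : FilteredComplex k) : FilteredHomotopyEquiv k X X := by
  refine ⟨LinearMap.id, LinearMap.id, 0, 0, ⟨rfl, fun i => by simp⟩,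
    ⟨rfl, fun i => by simp⟩, fun i => by simp, fun i => by simp, by simp, by simp⟩

-- transitivity
lemma FHE_trans {X Y Z : FilteredComplex k} (h1 : FilteredHomotopyEquiv k X Y)
    (h2 : FilteredHomotopyEquiv k Y Z) : FilteredHomotopyEquiv k X Z := by
  obtain ⟨f, g, hX, hY, ⟨fc, ff⟩, ⟨gc, gf⟩, hXp, hYp, e1, e2⟩ := h1
  obtain ⟨f', g', hY', hZ', ⟨fc', ff'⟩, ⟨gc', gf'⟩, hYp', hZp', e1', e2'⟩ := h2
  have Fc : ∀ z, f (X.d z) = Y.d (f z) := fun z => LinearMap.congr_fun fc z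
  have Gc : ∀ z, g (Y.d z) = X.d (g z) := fun z => LinearMap.congr_fun gc z
  have Fc' : ∀ z, f' (Y.d z) = Z.d (f' z) := fun z => LinearMap.congr_fun fc' z
  have Gc' : ∀ z, g' (Z.d z) = Y.d (g' z) := fun z => LinearMap.congr_fun gc' z
  have E1 : ∀ z, g (f z) - z = X.d (hX z) + hX (X.d z) := fun z => by
    simpa using LinearMap.congr_fun e1 z
  have E2 : ∀ z, f (g z) - z = Y.d (hY z) + hY (Y.d z) := fun z => by
    simpa using LinearMap.congr_fun e2 z
  have E1' : ∀ z, g' (f' z) - z = Y.d (hY' z) + hY' (Y.d z) := fun z => by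
    simpa using LinearMap.congr_fun e1' z
  have E2' : ∀ z, f' (g' z) - z = Z.d (hZ' z) + hZ' (Z.d z) := fun z => by
    simpa using LinearMap.congr_fun e2' z
  refine ⟨f' ∘ₗ f, g ∘ₗ g', g ∘ₗ hY' ∘ₗ f + hX, f' ∘ₗ hY ∘ₗ g' + hZ', ?_, ?_, ?_, ?_, ?_, ?_⟩
  · constructor
    · ext z; simp only [LinearMap.comp_apply]; rw [Fc, Fc']
    · intro i
      rw [Submodule.map_comp]
      exact le_trans (Submodule.map_mono (ff i)) (ff' i)
  · constructor
    · ext z; simp only [LinearMap.comp_apply]; rw [Gc', Gc]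
    · intro i
      rw [Submodule.map_comp]
      exact le_trans (Submodule.map_mono (gf' i)) (gf i)
  · intro i
    rintro _ ⟨z, hz, rfl⟩
    simp only [LinearMap.add_apply, LinearMap.comp_apply]
    refine Submodule.add_mem _ ?_ (hXp i ⟨z, hz, rfl⟩)
    exact gf i ⟨_, hYp' i ⟨_, ff i ⟨z, hz, rfl⟩, rfl⟩, rfl⟩
  · intro i
    rintro _ ⟨z, hz, rfl⟩
    simp only [LinearMap.add_apply, LinearMap.comp_apply]
    refine Submodule.add_mem _ ?_ (hZp' i ⟨z, hz, rfl⟩)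
    exact ff' i ⟨_, hYp i ⟨_, gf' i ⟨z, hz, rfl⟩, rfl⟩, rfl⟩
  · ext z
    simp only [LinearMap.sub_apply, LinearMap.add_apply, LinearMap.comp_apply,
      LinearMap.id_apply]
    have h3 : g (g' (f' (f z))) - z
        = g (g' (f' (f z)) - f z) + (g (f z) - z) := by
      rw [map_sub]; abel
    rw [h3, E1' (f z), E1 z, map_add, Gc, Fc, map_add]
    abel
  · ext z
    simp only [LinearMap.sub_apply, LinearMap.add_apply, LinearMap.comp_apply,
      LinearMap.id_apply]
    have h3 : f' (f (g (g' z))) - z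
        = f' (f (g (g' z)) - g' z) + (f' (g' z) - z) := by
      rw [map_sub]; abel
    rw [h3, E2 (g' z), E2' z, map_add, Fc', Gc', map_add]
    abel


lemma reduction (X : FilteredComplex k) (hfin : FiniteDimensional k X.C)
    (i : ℤ) (x : X.C) (hx : x ∈ X.filt i) (hdx : X.d x ∉ X.filt (i - 1)) :
    ∃ Y : FilteredComplex k, FiniteDimensional k Y.C ∧
      Module.finrank k Y.C < Module.finrank k X.C ∧ FilteredHomotopyEquiv k X Y := by
  classical
  set y := X.d x with hy
  have hdsq : ∀ z : X.C, X.d (X.d z) = 0 := fun z => LinearMap.congr_fun X.dsq z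
  have hdy : X.d y = 0 := hdsq x
  have hyI : y ∈ X.filt i := X.dfilt i ⟨x, hx, rfl⟩
  set W : Submodule k X.C := X.filt (i - 1) ⊔ Submodule.span k {x} with hW
  have hxW : x ∈ W := Submodule.mem_sup_right (Submodule.mem_span_singleton_self x)
  have hyW : y ∉ W := by
    intro hmem
    rw [hW, Submodule.mem_sup] at hmem
    obtain ⟨w, hw, s, hs, hws⟩ := hmem
    obtain ⟨c, rfl⟩ := Submodule.mem_span_singleton.mp hs
    have h1 : X.d w + c • y = 0 := by
      have h1 := congrArg X.d hws
      rw [map_add, map_smul, ← hy, hdy] at h1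
      exact h1
    by_cases hc : c = 0
    · apply hdx
      rw [← hws, hc]
      simpa using hw
    · apply hdx
      have hdw : X.d w ∈ X.filt (i - 1) := X.dfilt _ ⟨w, hw, rfl⟩
      have h3 : c • y = -(X.d w) := by
        rw [eq_neg_iff_add_eq_zero, add_comm]; exact h1
      have h2 : y = (-c⁻¹) • X.d w := by
        rw [neg_smul, ← smul_neg, ← h3, inv_smul_smul₀ hc]
      rw [h2]
      exact Submodule.smul_mem _ _ hdw
  -- choose a functional vanishing on W with φ y = 1
  obtain ⟨ψ, hψ⟩ : ∃ ψ : Module.Dual k (X.C ⧸ W), ψ (Submodule.Quotient.mk y) ≠ 0 := by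
    by_contra hcon
    push_neg at hcon
    exact hyW ((Submodule.Quotient.mk_eq_zero W).mp
      ((Module.forall_dual_apply_eq_zero_iff k _).mp hcon))
  set φ : X.C →ₗ[k] k := (ψ (Submodule.Quotient.mk y))⁻¹ • (ψ ∘ₗ W.mkQ) with hφ
  have φW : ∀ z ∈ W, φ z = 0 := by
    intro z hz
    have hz0 : W.mkQ z = 0 := by
      rw [Submodule.mkQ_apply]
      exact (Submodule.Quotient.mk_eq_zero W).mpr hz
    simp [hφ, hz0]
  have φy : φ y = 1 := by
    simp only [hφ, LinearMap.smul_apply, LinearMap.comp_apply, Submodule.mkQ_apply,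
      smul_eq_mul]
    exact inv_mul_cancel₀ hψ
  have φx : φ x = 0 := φW x hxW
  have φF : ∀ z ∈ X.filt (i - 1), φ z = 0 := fun z hz => φW z (Submodule.mem_sup_left hz)
  -- the projection p and homotopy hmap
  set hmap : X.C →ₗ[k] X.C := LinearMap.smulRight φ x with hhmap
  set p : X.C →ₗ[k] X.C :=
    LinearMap.id - (LinearMap.smulRight φ y + LinearMap.smulRight (φ ∘ₗ X.d) x) with hp
  have pdef : ∀ z, p z = z - (φ z • y + φ (X.d z) • x) := by
    intro z; simp [hp]
  have pd : ∀ z, p (X.d z) = X.d (p z) := by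
    intro z
    rw [pdef, pdef, map_sub, map_add, map_smul, map_smul, hdsq z, ← hy, hdy]
    simp
  have φp : ∀ z, φ (p z) = 0 := by
    intro z
    rw [pdef, map_sub, map_add, map_smul, map_smul, φy, φx]
    simp
  have φdp : ∀ z, φ (X.d (p z)) = 0 := by
    intro z
    rw [← pd, pdef (X.d z), map_sub, map_add, map_smul, map_smul, φy, φx, hdsq z]
    simp
  have pp : ∀ z, p (p z) = p z := by
    intro z
    rw [pdef (p z), φp, φdp]
    simp
  have px : p x = 0 := by
    rw [pdef, φx, ← hy, φy]
    simp
  have hx0 : x ≠ 0 := by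
    intro h0
    apply hdx
    rw [hy, h0, map_zero]
    exact Submodule.zero_mem _
  have pfilt : ∀ j, ∀ z ∈ X.filt j, p z ∈ X.filt j := by
    intro j z hz
    rcases le_or_gt i j with hij | hij
    · rw [pdef]
      exact Submodule.sub_mem _ hz (Submodule.add_mem _
        (Submodule.smul_mem _ _ (X.mono hij hyI)) (Submodule.smul_mem _ _ (X.mono hij hx)))
    · have hj : X.filt j ≤ X.filt (i - 1) := X.mono (by omega)
      have hz' := hj hz
      have hdz' : X.d z ∈ X.filt (i - 1) := hj (X.dfilt j ⟨z, hz, rfl⟩)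
      rw [pdef, φF z hz', φF _ hdz']
      simpa using hz
  have hfiltH : ∀ j, ∀ z ∈ X.filt j, hmap z ∈ X.filt j := by
    intro j z hz
    rcases le_or_gt i j with hij | hij
    · simp only [hhmap, LinearMap.smulRight_apply]
      exact Submodule.smul_mem _ _ (X.mono hij hx)
    · have hj : X.filt j ≤ X.filt (i - 1) := X.mono (by omega)
      simp only [hhmap, LinearMap.smulRight_apply, φF z (hj hz)]
      simpa using Submodule.zero_mem (X.filt j)
  -- the range of p as a filtered complex
  set P : Submodule k X.C := LinearMap.range p with hP
  have hdP : ∀ z ∈ P, X.d z ∈ P := by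
    rintro _ ⟨u, rfl⟩
    exact ⟨X.d u, pd u⟩
  set dY : ↥P →ₗ[k] ↥P := X.d.restrict hdP with hdY
  set Y : FilteredComplex k :=
    { C := ↥P
      d := dY
      dsq := by
        ext z
        have h1 : ((dY ∘ₗ dY) z : X.C) = X.d (X.d (z : X.C)) := rfl
        have h2 : (((0 : ↥P →ₗ[k] ↥P)) z : X.C) = 0 := rfl
        rw [h1, h2, hdsq]
      filt := fun j => Submodule.comap P.subtype (X.filt j)
      mono := fun a b hab => Submodule.comap_mono (X.mono hab)
      exhaustive := fun z => by
        obtain ⟨j, hj⟩ := X.exhaustive (z : X.C)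
        exact ⟨j, hj⟩
      dfilt := by
        rintro j _ ⟨z, hz, rfl⟩
        show (dY z : X.C) ∈ X.filt j
        exact X.dfilt j ⟨(z : X.C), hz, rfl⟩ } with hYdef
  refine ⟨Y, ?_, ?_, ?_⟩
  · exact inferInstanceAs (FiniteDimensional k ↥P)
  · have hPne : P ≠ ⊤ := by
      intro htop
      have hxP : x ∈ P := by rw [htop]; trivial
      obtain ⟨u, hu⟩ := hxP
      have hfix : p x = x := by rw [← hu, pp, hu]
      rw [px] at hfix
      exact hx0 hfix.symm
    exact Submodule.finrank_lt hPne
  · -- the homotopy equivalence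
    set f : X.C →ₗ[k] ↥P := LinearMap.codRestrict P p (fun z => LinearMap.mem_range_self p z)
      with hf
    have fapp : ∀ z, (f z : X.C) = p z := fun z => rfl
    refine ⟨f, P.subtype, -hmap, 0, ⟨?_, ?_⟩, ⟨?_, ?_⟩, ?_, ?_, ?_, ?_⟩
    · ext z
      have h1 : ((f ∘ₗ X.d) z : X.C) = p (X.d z) := rfl
      have h2 : ((Y.d ∘ₗ f) z : X.C) = X.d (p z) := rfl
      rw [h1, h2, pd]
    · rintro j _ ⟨z, hz, rfl⟩
      show (f z : X.C) ∈ X.filt j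
      rw [fapp]
      exact pfilt j z hz
    · ext z
      have h1 : (P.subtype ∘ₗ Y.d) z = X.d (z : X.C) := rfl
      have h2 : (X.d ∘ₗ P.subtype) z = X.d (z : X.C) := rfl
      rw [h1, h2]
    · rintro j _ ⟨z, hz, rfl⟩
      exact hz
    · rintro j _ ⟨z, hz, rfl⟩
      rw [LinearMap.neg_apply]
      exact Submodule.neg_mem _ (hfiltH j z hz)
    · rintro j _ ⟨z, hz, rfl⟩
      simpa using Submodule.zero_mem (Submodule.comap P.subtype (X.filt j))
    · ext z
      simp only [LinearMap.sub_apply, LinearMap.add_apply, LinearMap.comp_apply,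
        LinearMap.id_apply, LinearMap.neg_apply, Submodule.subtype_apply,
        hhmap, LinearMap.smulRight_apply, map_neg, map_smul]
      rw [show P.subtype (f z) = p z from rfl, pdef, ← hy]
      abel
    · ext z
      obtain ⟨u, hu⟩ := (z : ↥P).property
      have h2 : p (z : X.C) = (z : X.C) := by rw [← hu, pp]
      simp only [LinearMap.sub_apply, LinearMap.add_apply, LinearMap.comp_apply,
        LinearMap.id_apply, LinearMap.zero_apply, map_zero, add_zero,
        AddSubgroupClass.coe_sub, ZeroMemClass.coe_zero, Submodule.subtype_apply]
      change ((f (z : X.C) : X.C) - (z : X.C)) = 0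
      rw [fapp, h2, sub_self]


/-- Every finitely generated filtered chain complex over a field
(where the homology of the associated graded complex is automatically free) is
filtered chain homotopy equivalent to a minimal filtered complex. -/
theorem exists_minimal_model (X : FilteredComplex k)
    (hfin : FiniteDimensional k X.C) :
    ∃ Y : FilteredComplex k, IsMinimal k Y ∧ FilteredHomotopyEquiv k X Y := by
  classical
  suffices H : ∀ n : ℕ, ∀ X : FilteredComplex k, FiniteDimensional k X.C →
      Module.finrank k X.C ≤ n →
      ∃ Y : FilteredComplex k, IsMinimal k Y ∧ FilteredHomotopyEquiv k X Y by
    exact H (Module.finrank k X.C) X hfin le_rfl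
  intro n
  induction n with
  | zero =>
    intro X hX hle
    by_cases hm : IsMinimal k X
    · exact ⟨X, hm, FHE_refl k X⟩
    · exfalso
      obtain ⟨i, hi⟩ : ∃ i, ¬ Submodule.map X.d (X.filt i) ≤ X.filt (i - 1) := by
        simpa [IsMinimal, not_forall] using hm
      obtain ⟨w, hw, hw2⟩ := SetLike.not_le_iff_exists.mp hi
      obtain ⟨x, hxm, rfl⟩ := hw
      obtain ⟨Y, _, hlt, _⟩ := reduction k X hX i x hxm hw2
      omega
  | succ n IH =>
    intro X hX hle
    by_cases hm : IsMinimal k X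
    · exact ⟨X, hm, FHE_refl k X⟩
    · obtain ⟨i, hi⟩ : ∃ i, ¬ Submodule.map X.d (X.filt i) ≤ X.filt (i - 1) := by
        simpa [IsMinimal, not_forall] using hm
      obtain ⟨w, hw, hw2⟩ := SetLike.not_le_iff_exists.mp hi
      obtain ⟨x, hxm, rfl⟩ := hw
      obtain ⟨Y, hYfin, hlt, hequiv⟩ := reduction k X hX i x hxm hw2
      obtain ⟨Z, hZmin, hZequiv⟩ := IH Y hYfin (by omega)
      exact ⟨Z, hZmin, FHE_trans k hequiv hZequiv⟩
end
end
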